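/- arXiv:2410.15634 — 9 statements merged into one kernel-verified Lean document; each statement's English description precedes it below -/
import Mathlib

section
/- Fix integers n ≥ 1 and p ≥ 1, data points (x̃_1,ỹ_1),…,(x̃_n,ỹ_n) ∈ ℝ^p × ℝ, a vector β ∈ ℝ^p, and a real ρ > 0. Let P̃_n denote the empirical probability measure (1/n)∑_{i=1}^n δ_{(x̃_i,ỹ_i)} on ℝ^p × ℝ. Then the supremum, over all probability measures π on (ℝ^p × ℝ) × (ℝ^p × ℝ) whose first marginal equals P̃_n and which satisfy ∫ ‖(x,y) − (x′,y′)‖² dπ((x,y),(x′,y′)) ≤ ρ, of the integral ∫ (y′ − x′ᵀβ)² dπ((x,y),(x′,y′)), equals ( √((1/n)∑_{i=1}^n (ỹ_i − x̃_iᵀβ)²) + √(ρ(‖β‖² + 1)) )². -/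
/-!
For a coupling `π`, Cauchy–Schwarz in `ℝ^{p+1}` gives pointwise
`|y' - x'ᵀβ| ≤ |y - xᵀβ| + √(‖β‖² + 1) ‖(x, y) - (x', y')‖`, and Minkowski's inequality in
`L²(π)` turns this into `√(∫ (y' - x'ᵀβ)² dπ) ≤ √(mean squared residual) + √(ρ (‖β‖² + 1))`.
The bound is attained by transporting each data point along `(-β, 1)`, the direction in which the
residual grows fastest, by an amount proportional to its residual, with total cost `ρ`.
-/

open MeasureTheory
open scoped ENNReal

theorem ENNReal.ofReal_sqrt_sq (r : ℝ) : ENNReal.ofReal (√r ^ 2) = ENNReal.ofReal r := by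
  rw [Real.sq_sqrt', ENNReal.ofReal_max, ENNReal.ofReal_zero, max_eq_left zero_le]

theorem ENNReal.le_ofReal_sqrt_of_sq_le {a : ℝ≥0∞} {r : ℝ} (h : a ^ 2 ≤ ENNReal.ofReal r) :
    a ≤ ENNReal.ofReal √r := by
  rwa [← ENNReal.pow_le_pow_left_iff two_ne_zero, ← ENNReal.ofReal_pow (Real.sqrt_nonneg r),
    ENNReal.ofReal_sqrt_sq]

theorem ENNReal.eq_ofReal_sqrt_of_sq_eq {a : ℝ≥0∞} {r : ℝ} (h : a ^ 2 = ENNReal.ofReal r) :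
    a = ENNReal.ofReal √r := by
  refine (ENNReal.pow_right_strictMono two_ne_zero).injective ?_
  rw [h, ← ENNReal.ofReal_pow (Real.sqrt_nonneg r), ENNReal.ofReal_sqrt_sq]

theorem eLpNorm_two_sq {α : Type*} [MeasurableSpace α] (f : α → ℝ) (μ : Measure α) :
    eLpNorm f 2 μ ^ 2 = ∫⁻ x, ENNReal.ofReal (f x ^ 2) ∂μ := by
  rw [eLpNorm_eq_lintegral_rpow_enorm_toReal two_ne_zero ENNReal.ofNat_ne_top, ENNReal.toReal_ofNat,
    ← ENNReal.rpow_natCast, ← ENNReal.rpow_mul]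
  norm_num
  refine lintegral_congr fun x => ?_
  rw [Real.enorm_eq_ofReal_abs, ← ENNReal.ofReal_pow (abs_nonneg _), sq_abs]

namespace WassersteinDRO

section Empirical

variable {α : Type*} [MeasurableSpace α] {n : ℕ}

noncomputable def empiricalMeasure (z : Fin n → α) : Measure α :=
  (n : ℝ≥0∞)⁻¹ • ∑ i, Measure.dirac (z i)

theorem isProbabilityMeasure_empiricalMeasure [NeZero n] (z : Fin n → α) :
    IsProbabilityMeasure (empiricalMeasure z) := by
  constructor
  simp [empiricalMeasure, ENNReal.inv_mul_cancel (NeZero.ne (n : ℝ≥0∞))]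

theorem map_empiricalMeasure {β : Type*} [MeasurableSpace β] (z : Fin n → α) {f : α → β}
    (hf : Measurable f) : (empiricalMeasure z).map f = empiricalMeasure (f ∘ z) := by
  simp [empiricalMeasure, Measure.map_smul, Measure.map_finset_sum hf.aemeasurable,
    Measure.map_dirac' hf]

theorem lintegral_ofReal_empiricalMeasure [MeasurableSingletonClass α] [NeZero n]
    (z : Fin n → α) {f : α → ℝ} (hf : ∀ i, 0 ≤ f (z i)) :
    ∫⁻ x, ENNReal.ofReal (f x) ∂empiricalMeasure z = ENNReal.ofReal ((∑ i, f (z i)) / n) := by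
  rw [empiricalMeasure, lintegral_smul_measure, lintegral_finsetSum_measure]
  simp only [lintegral_dirac]
  rw [← ENNReal.ofReal_sum_of_nonneg fun i _ => hf i,
    ENNReal.ofReal_div_of_pos (Nat.cast_pos.mpr (Nat.pos_of_neZero n)), ENNReal.ofReal_natCast,
    smul_eq_mul, ENNReal.div_eq_inv_mul]

theorem eLpNorm_two_empiricalMeasure [MeasurableSingletonClass α] [NeZero n] (f : α → ℝ)
    (z : Fin n → α) :
    eLpNorm f 2 (empiricalMeasure z) = ENNReal.ofReal √((∑ i, f (z i) ^ 2) / n) := by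
  refine ENNReal.eq_ofReal_sqrt_of_sq_eq ?_
  rw [eLpNorm_two_sq, lintegral_ofReal_empiricalMeasure (f := fun x => f x ^ 2) _
    fun i => sq_nonneg _]

end Empirical

section Regression

variable {p : ℕ}

def residual (β : Fin p → ℝ) (v : (Fin p → ℝ) × ℝ) : ℝ := v.2 - ∑ j, v.1 j * β j

def sqDist (v w : (Fin p → ℝ) × ℝ) : ℝ := ∑ j, (v.1 j - w.1 j) ^ 2 + (v.2 - w.2) ^ 2

theorem continuous_residual (β : Fin p → ℝ) : Continuous (residual β) := by
  unfold residual; fun_prop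

theorem continuous_sqDist : Continuous fun w : ((Fin p → ℝ) × ℝ) × ((Fin p → ℝ) × ℝ) =>
    sqDist w.1 w.2 := by
  unfold sqDist; fun_prop

theorem sqDist_nonneg (v w : (Fin p → ℝ) × ℝ) : 0 ≤ sqDist v w := by
  unfold sqDist; positivity

-- Cauchy–Schwarz in `ℝ^{p+1}` against `(-β, 1)`, the vector representing `residual β`.
theorem abs_residual_sub_le (β : Fin p → ℝ) (v w : (Fin p → ℝ) × ℝ) :
    |residual β w - residual β v| ≤ √(∑ j, β j ^ 2 + 1) * √(sqDist v w) := by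
  have hcs := Finset.sum_mul_sq_le_sq_mul_sq Finset.univ
    (fun o : Option (Fin p) => o.elim (v.2 - w.2) fun j => v.1 j - w.1 j)
    (fun o : Option (Fin p) => o.elim (-1) β)
  simp only [Fintype.sum_option, Option.elim_none, Option.elim_some, sub_mul,
    Finset.sum_sub_distrib] at hcs
  rw [mul_comm, ← Real.sqrt_mul (sqDist_nonneg v w)]
  refine Real.abs_le_sqrt (le_of_eq_of_le ?_ (hcs.trans_eq ?_))
  · simp only [residual]; ring
  · simp only [sqDist]; ring

theorem abs_residual_le (β : Fin p → ℝ) (v w : (Fin p → ℝ) × ℝ) :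
    |residual β w| ≤ |residual β v| + √(∑ j, β j ^ 2 + 1) * √(sqDist v w) := by
  linarith [abs_sub_abs_le_abs_sub (residual β w) (residual β v), abs_residual_sub_le β v w]

theorem lintegral_sq_residual_le (β : Fin p → ℝ) {ρ : ℝ} {P : Measure ((Fin p → ℝ) × ℝ)}
    {π : Measure (((Fin p → ℝ) × ℝ) × ((Fin p → ℝ) × ℝ))} (hπ : π.map Prod.fst = P)
    (hcost : ∫⁻ w, ENNReal.ofReal (sqDist w.1 w.2) ∂π ≤ ENNReal.ofReal ρ) :
    ∫⁻ w, ENNReal.ofReal (residual β w.2 ^ 2) ∂π ≤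
      (eLpNorm (residual β) 2 P + ENNReal.ofReal √(ρ * (∑ j, β j ^ 2 + 1))) ^ 2 := by
  set D := √(∑ j, β j ^ 2 + 1)
  have hD : 0 ≤ ∑ j, β j ^ 2 + 1 := by positivity
  have htransport : eLpNorm (fun w => D * √(sqDist w.1 w.2)) 2 π ≤
      ENNReal.ofReal √(ρ * (∑ j, β j ^ 2 + 1)) := by
    refine ENNReal.le_ofReal_sqrt_of_sq_le ?_
    calc eLpNorm (fun w => D * √(sqDist w.1 w.2)) 2 π ^ 2
        = ∫⁻ w, ENNReal.ofReal (∑ j, β j ^ 2 + 1) * ENNReal.ofReal (sqDist w.1 w.2) ∂π := by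
          rw [eLpNorm_two_sq]
          refine lintegral_congr fun w => ?_
          rw [mul_pow, Real.sq_sqrt hD, Real.sq_sqrt (sqDist_nonneg _ _), ENNReal.ofReal_mul hD]
      _ = ENNReal.ofReal (∑ j, β j ^ 2 + 1) * ∫⁻ w, ENNReal.ofReal (sqDist w.1 w.2) ∂π :=
          lintegral_const_mul _ continuous_sqDist.measurable.ennreal_ofReal
      _ ≤ ENNReal.ofReal (∑ j, β j ^ 2 + 1) * ENNReal.ofReal ρ := by gcongr
      _ = ENNReal.ofReal (ρ * (∑ j, β j ^ 2 + 1)) := by rw [← ENNReal.ofReal_mul hD, mul_comm]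
  rw [← eLpNorm_two_sq]
  gcongr
  calc eLpNorm (fun w => residual β w.2) 2 π
      ≤ eLpNorm (fun w => ‖residual β w.1‖ + D * √(sqDist w.1 w.2)) 2 π :=
        eLpNorm_mono_real fun w => abs_residual_le β w.1 w.2
    _ ≤ eLpNorm (fun w => ‖residual β w.1‖) 2 π +
          eLpNorm (fun w => D * √(sqDist w.1 w.2)) 2 π :=
        eLpNorm_add_le ((continuous_residual β).comp continuous_fst).norm.aestronglyMeasurable
          (continuous_const.mul continuous_sqDist.sqrt).aestronglyMeasurable one_le_two
    _ ≤ eLpNorm (residual β) 2 P + ENNReal.ofReal √(ρ * (∑ j, β j ^ 2 + 1)) := by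
        rw [eLpNorm_norm, ← hπ, eLpNorm_map_measure (continuous_residual β).aestronglyMeasurable
          measurable_fst.aemeasurable]
        exact add_le_add le_rfl htransport

theorem residual_add_smul (β : Fin p → ℝ) (v : (Fin p → ℝ) × ℝ) (s : ℝ) :
    residual β (v + s • (-β, 1)) = residual β v + s * (∑ j, β j ^ 2 + 1) := by
  simp only [residual, Prod.fst_add, Prod.snd_add, Prod.smul_mk, Pi.add_apply, Pi.smul_apply,
    Pi.neg_apply, smul_eq_mul, add_mul, Finset.sum_add_distrib, mul_neg, neg_mul,
    Finset.sum_neg_distrib, mul_assoc, ← sq, ← Finset.mul_sum]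
  ring

theorem sqDist_add_smul (β : Fin p → ℝ) (v : (Fin p → ℝ) × ℝ) (s : ℝ) :
    sqDist v (v + s • (-β, 1)) = s ^ 2 * (∑ j, β j ^ 2 + 1) := by
  simp only [sqDist, Prod.fst_add, Prod.snd_add, Prod.smul_mk, Pi.add_apply, Pi.smul_apply,
    Pi.neg_apply, smul_eq_mul, sub_add_cancel_left, neg_sq, mul_neg, mul_pow, ← Finset.mul_sum]
  ring

theorem exists_eq_mul_sqrt_mean_sq {n : ℕ} (r : Fin n → ℝ) :
    ∃ a : Fin n → ℝ, ∑ i, a i ^ 2 = n ∧ ∀ i, r i = a i * √((∑ i, r i ^ 2) / n) := by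
  set M := (∑ i, r i ^ 2) / n
  by_cases hM : M = 0
  · refine ⟨1, by simp, fun i => ?_⟩
    have hsum : ∑ i, r i ^ 2 = 0 := by
      rcases div_eq_zero_iff.mp hM with h | h
      · exact h
      · exact absurd h (Nat.cast_ne_zero.mpr (Fin.pos i).ne')
    rw [hM, Real.sqrt_zero, mul_zero]
    exact pow_eq_zero_iff two_ne_zero |>.mp <|
      (Finset.sum_eq_zero_iff_of_nonneg fun i _ => sq_nonneg (r i)).mp hsum i (Finset.mem_univ i)
  · have hsqrt : √M ≠ 0 := Real.sqrt_ne_zero'.mpr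
      (lt_of_le_of_ne (by positivity) (Ne.symm hM))
    refine ⟨fun i => r i / √M, ?_, fun i => (div_mul_cancel₀ _ hsqrt).symm⟩
    simp only [div_pow, ← Finset.sum_div]
    rw [Real.sq_sqrt (by positivity), div_div_cancel₀ (div_ne_zero_iff.mp hM).1]

theorem exists_coupling_lintegral_sq_residual_eq (β : Fin p → ℝ) {n : ℕ} [NeZero n]
    (z : Fin n → (Fin p → ℝ) × ℝ) (ρ : ℝ) :
    ∃ π : Measure (((Fin p → ℝ) × ℝ) × ((Fin p → ℝ) × ℝ)),
      IsProbabilityMeasure π ∧ π.map Prod.fst = empiricalMeasure z ∧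
      ∫⁻ w, ENNReal.ofReal (sqDist w.1 w.2) ∂π ≤ ENNReal.ofReal ρ ∧
      ∫⁻ w, ENNReal.ofReal (residual β w.2 ^ 2) ∂π =
        ENNReal.ofReal ((√((∑ i, residual β (z i) ^ 2) / n) +
          √(ρ * (∑ j, β j ^ 2 + 1))) ^ 2) := by
  obtain ⟨a, ha, hr⟩ := exists_eq_mul_sqrt_mean_sq fun i => residual β (z i)
  set M := (∑ i, residual β (z i) ^ 2) / n
  set B := ∑ j, β j ^ 2 + 1
  have hB : 0 < B := by positivity
  have hmean : ∀ K : ℝ, (∑ i, a i ^ 2 * K) / n = K := fun K => by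
    rw [← Finset.sum_mul, ha, mul_div_cancel_left₀ _ (NeZero.ne (n : ℝ))]
  -- Each data point moves along `(-β, 1)` by an amount proportional to its residual: this makes
  -- the Cauchy–Schwarz and Minkowski steps of the upper bound equalities.
  set T : Fin n → (Fin p → ℝ) × ℝ := fun i => z i + (a i * √ρ / √B) • (-β, 1)
  have hcost : ∀ i, sqDist (z i) (T i) = a i ^ 2 * √ρ ^ 2 := fun i => by
    rw [sqDist_add_smul, div_pow, mul_pow, Real.sq_sqrt hB.le, div_mul_cancel₀ _ hB.ne']
  have hshift : √ρ / √B * B = √ρ * √B := by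
    rw [div_mul_eq_mul_div, div_eq_iff (Real.sqrt_pos.mpr hB).ne', mul_assoc,
      Real.mul_self_sqrt hB.le]
  have hres : ∀ i, residual β (T i) ^ 2 = a i ^ 2 * (√M + √(ρ * B)) ^ 2 := fun i => by
    rw [residual_add_smul, hr i, Real.sqrt_mul' _ hB.le, mul_div_assoc, mul_assoc, hshift]
    ring
  refine ⟨empiricalMeasure fun i => (z i, T i), isProbabilityMeasure_empiricalMeasure _,
    map_empiricalMeasure _ measurable_fst, ?_, ?_⟩
  · rw [lintegral_ofReal_empiricalMeasure (f := fun w : _ × _ => sqDist w.1 w.2) _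
      fun i => sqDist_nonneg _ _]
    simp only [hcost, hmean, ENNReal.ofReal_sqrt_sq, le_rfl]
  · rw [lintegral_ofReal_empiricalMeasure (f := fun w : _ × _ => residual β w.2 ^ 2) _
      fun i => sq_nonneg _]
    simp only [hres, hmean]

end Regression

end WassersteinDRO

open WassersteinDRO

theorem stmt_0_general (n p : ℕ) (hn : 1 ≤ n)
    (x : Fin n → Fin p → ℝ) (y : Fin n → ℝ) (β : Fin p → ℝ) (ρ : ℝ) :
    sSup {r : ℝ≥0∞ |
        ∃ π : Measure (((Fin p → ℝ) × ℝ) × ((Fin p → ℝ) × ℝ)),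
          IsProbabilityMeasure π ∧
          π.map Prod.fst = (n : ℝ≥0∞)⁻¹ • ∑ i : Fin n, Measure.dirac (x i, y i) ∧
          (∫⁻ w, ENNReal.ofReal
              ((∑ j, (w.1.1 j - w.2.1 j) ^ 2) + (w.1.2 - w.2.2) ^ 2) ∂π) ≤
            ENNReal.ofReal ρ ∧
          r = ∫⁻ w, ENNReal.ofReal ((w.2.2 - ∑ j, w.2.1 j * β j) ^ 2) ∂π} =
      ENNReal.ofReal
        ((Real.sqrt ((∑ i, (y i - ∑ j, x i j * β j) ^ 2) / n) +
            Real.sqrt (ρ * ((∑ j, β j ^ 2) + 1))) ^ 2) := by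
  have : NeZero n := ⟨by omega⟩
  apply le_antisymm
  · refine sSup_le ?_
    rintro _ ⟨π, -, hπ, hcost, rfl⟩
    have hle := lintegral_sq_residual_le β (P := empiricalMeasure fun i => (x i, y i)) hπ hcost
    rwa [eLpNorm_two_empiricalMeasure, ← ENNReal.ofReal_add (Real.sqrt_nonneg _)
      (Real.sqrt_nonneg _), ← ENNReal.ofReal_pow (by positivity)] at hle
  · obtain ⟨π, hprob, hπ, hcost, hval⟩ :=
      exists_coupling_lintegral_sq_residual_eq β (fun i => (x i, y i)) ρ
    exact le_sSup ⟨π, hprob, hπ, hcost, hval.symm⟩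

/-- Wasserstein-DRO duality for the DRIVE objective.  The supremum, over
all couplings `π` whose first marginal is the empirical measure
`(1/n)∑ δ_{(x̃ᵢ,ỹᵢ)}` and whose expected squared Euclidean transport cost is at most
`ρ`, of the second-marginal mean squared error `∫ (y′ − x′ᵀβ)² dπ`, equals
`(√((1/n)∑(ỹᵢ − x̃ᵢᵀβ)²) + √(ρ(‖β‖²+1)))²`. -/
theorem stmt_0 (n p : ℕ) (hn : 1 ≤ n) (hp : 1 ≤ p)
    (x : Fin n → Fin p → ℝ) (y : Fin n → ℝ) (β : Fin p → ℝ) (ρ : ℝ) (hρ : 0 < ρ) :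
    sSup {r : ℝ≥0∞ |
        ∃ π : Measure (((Fin p → ℝ) × ℝ) × ((Fin p → ℝ) × ℝ)),
          IsProbabilityMeasure π ∧
          π.map Prod.fst = (n : ℝ≥0∞)⁻¹ • ∑ i : Fin n, Measure.dirac (x i, y i) ∧
          (∫⁻ w, ENNReal.ofReal
              ((∑ j, (w.1.1 j - w.2.1 j) ^ 2) + (w.1.2 - w.2.2) ^ 2) ∂π) ≤
            ENNReal.ofReal ρ ∧
          r = ∫⁻ w, ENNReal.ofReal ((w.2.2 - ∑ j, w.2.1 j * β j) ^ 2) ∂π} =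
      ENNReal.ofReal
        ((Real.sqrt ((∑ i, (y i - ∑ j, x i j * β j) ^ 2) / n) +
            Real.sqrt (ρ * ((∑ j, β j ^ 2) + 1))) ^ 2) :=
  stmt_0_general n p hn x y β ρ
end

section
/- Let m ≥ 1, let α, w̃ ∈ ℝ^m, and let γ ∈ ℝ satisfy γ > αᵀα = ‖α‖². Then the function w ↦ (αᵀw)² − γ‖w − w̃‖² on ℝ^m attains its maximum at w* = (I − ααᵀ/γ)^{-1} w̃, and sup_{w ∈ ℝ^m} [ (αᵀw)² − γ‖w − w̃‖² ] = (γ/(γ − αᵀα)) (αᵀw̃)². -/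
open Matrix

/-- The matrix `I − ααᵀ/γ`. -/
noncomputable def shermanMat (m : ℕ) (α : Fin m → ℝ) (γ : ℝ) : Matrix (Fin m) (Fin m) ℝ :=
  1 - γ⁻¹ • vecMulVec α α

/-- The maximizer `w* = (I − ααᵀ/γ)⁻¹ w̃`. -/
noncomputable def robustArgmax (m : ℕ) (α : Fin m → ℝ) (γ : ℝ) (wt : Fin m → ℝ) :
    Fin m → ℝ :=
  (shermanMat m α γ)⁻¹ *ᵥ wt

/-- For `γ > αᵀα`, the function `w ↦ (αᵀw)² − γ‖w − w̃‖²` attains its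
maximum at `w* = (I − ααᵀ/γ)⁻¹w̃`, with maximal value `(γ/(γ − αᵀα))(αᵀw̃)²`. -/
theorem stmt_2 (m : ℕ) (hm : 1 ≤ m) (α wt : Fin m → ℝ) (γ : ℝ) (hγ : α ⬝ᵥ α < γ) :
    (∀ w : Fin m → ℝ,
        (α ⬝ᵥ w) ^ 2 - γ * ∑ i, (w i - wt i) ^ 2 ≤
          (α ⬝ᵥ robustArgmax m α γ wt) ^ 2 -
            γ * ∑ i, (robustArgmax m α γ wt i - wt i) ^ 2) ∧
    (α ⬝ᵥ robustArgmax m α γ wt) ^ 2 -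
        γ * ∑ i, (robustArgmax m α γ wt i - wt i) ^ 2 =
      γ / (γ - α ⬝ᵥ α) * (α ⬝ᵥ wt) ^ 2 := by
  set a : ℝ := α ⬝ᵥ α with ha_def
  have ha : 0 ≤ a := by
    rw [ha_def, dotProduct]
    exact Finset.sum_nonneg fun i _ => mul_self_nonneg _
  have hγ0 : 0 < γ := lt_of_le_of_lt ha hγ
  have hs : 0 < γ - a := sub_pos.mpr hγ
  have hγne : γ ≠ 0 := ne_of_gt hγ0
  have hsne : γ - a ≠ 0 := ne_of_gt hs
  set A : Matrix (Fin m) (Fin m) ℝ := vecMulVec α α with hA_def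
  have hAA : A * A = a • A := by
    ext i j
    rw [Matrix.mul_apply]
    simp only [hA_def, vecMulVec_apply, Matrix.smul_apply, smul_eq_mul, ha_def, dotProduct,
      Finset.sum_mul]
    exact Finset.sum_congr rfl fun k _ => by ring
  have hinv : (shermanMat m α γ)⁻¹ = 1 + (γ - a)⁻¹ • A := by
    apply Matrix.inv_eq_right_inv
    rw [shermanMat, ← hA_def, sub_mul, one_mul, mul_add, mul_one, Matrix.smul_mul,
      Matrix.mul_smul, hAA]
    have hcoef : (γ - a)⁻¹ - γ⁻¹ - γ⁻¹ * ((γ - a)⁻¹ * a) = 0 := by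
      field_simp
      ring
    calc 1 + (γ - a)⁻¹ • A - (γ⁻¹ • A + γ⁻¹ • ((γ - a)⁻¹ • (a • A)))
        = 1 + ((γ - a)⁻¹ - γ⁻¹ - γ⁻¹ * ((γ - a)⁻¹ * a)) • A := by module
      _ = 1 := by rw [hcoef, zero_smul, add_zero]
  set c : ℝ := (γ - a)⁻¹ * (α ⬝ᵥ wt) with hc_def
  have hc : c * (γ - a) = α ⬝ᵥ wt := by
    rw [hc_def]; field_simp
  have hw : robustArgmax m α γ wt = fun i => wt i + c * α i := by
    rw [robustArgmax, hinv]
    funext i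
    rw [Matrix.add_mulVec, Matrix.one_mulVec, Pi.add_apply, Matrix.smul_mulVec,
      Pi.smul_apply, smul_eq_mul]
    congr 1
    rw [hc_def, Matrix.mulVec, dotProduct]
    simp only [hA_def, vecMulVec_apply, dotProduct, Finset.mul_sum]
    rw [Finset.sum_mul]
    exact Finset.sum_congr rfl fun k _ => by ring
  have hαw : α ⬝ᵥ robustArgmax m α γ wt = α ⬝ᵥ wt + c * a := by
    rw [hw]
    simp only [dotProduct, mul_add, Finset.sum_add_distrib, ha_def, Finset.mul_sum]
    congr 1
    exact Finset.sum_congr rfl fun k _ => by ring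
  have hnorm : ∑ i, (robustArgmax m α γ wt i - wt i) ^ 2 = c ^ 2 * a := by
    rw [hw]
    simp only [add_sub_cancel_left, mul_pow, ha_def, dotProduct, Finset.mul_sum]
    exact Finset.sum_congr rfl fun k _ => by ring
  constructor
  · intro w
    rw [hαw, hnorm]
    have hsplit : ∀ i, w i - wt i = (w i - robustArgmax m α γ wt i) + c * α i := by
      intro i; rw [hw]; ring
    set u : Fin m → ℝ := fun i => w i - robustArgmax m α γ wt i with hu_def
    set U : ℝ := ∑ i, u i ^ 2 with hU_def
    set D : ℝ := ∑ i, α i * u i with hD_def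
    have hU : 0 ≤ U := Finset.sum_nonneg fun i _ => sq_nonneg _
    have hCS : D ^ 2 ≤ a * U := by
      calc D ^ 2 ≤ (∑ i, α i ^ 2) * ∑ i, u i ^ 2 :=
            Finset.sum_mul_sq_le_sq_mul_sq Finset.univ α u
        _ = a * U := by
            rw [hU_def, ha_def, dotProduct]
            congr 1
            exact Finset.sum_congr rfl fun k _ => by ring
    have hsum : ∑ i, (w i - wt i) ^ 2 = U + 2 * c * D + c ^ 2 * a := by
      simp only [hsplit]
      rw [hU_def, hD_def, ha_def, dotProduct, Finset.mul_sum, Finset.mul_sum,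
        ← Finset.sum_add_distrib, ← Finset.sum_add_distrib]
      exact Finset.sum_congr rfl fun k _ => by simp only [hu_def]; ring
    have hαww : α ⬝ᵥ w = (α ⬝ᵥ wt + c * a) + D := by
      rw [hD_def, hαw.symm]
      simp only [hu_def, dotProduct, mul_sub, Finset.sum_sub_distrib]
      ring
    have hkey : D ^ 2 ≤ γ * U :=
      le_trans hCS (mul_le_mul_of_nonneg_right (le_of_lt hγ) hU)
    have hT : α ⬝ᵥ wt + c * a = c * γ := by
      have := hc; nlinarith [hc]
    rw [hαww, hsum, hT]
    nlinarith [hkey]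
  · rw [hαw, hnorm]
    have : c = (α ⬝ᵥ wt) / (γ - a) := by rw [hc_def]; ring
    rw [this]
    field_simp
    ring
end

section
/- Let p ≥ 1, let M be a symmetric positive definite p×p real matrix with smallest eigenvalue λ_min(M), let β₀ ∈ ℝ^p, and let ρ be a real number with 0 ≤ ρ ≤ λ_min(M). Then β₀ is the unique global minimizer over ℝ^p of the function β ↦ √((β − β₀)ᵀM(β − β₀)) + √(ρ(‖β‖² + 1)); that is, for every β ≠ β₀ the value of this function strictly exceeds its value √(ρ(‖β₀‖² + 1)) at β₀. -/
/-!
The penalty factors as `√(ρ (‖β‖² + 1)) = √ρ · √(‖β‖² + 1)`, and `β ↦ √(‖β‖² + 1)` (the norm of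
`(β, 1)`) is 1-Lipschitz, strictly between distinct points: the Cauchy–Schwarz defect comes from
the constant `1`. So the penalty drops from `β₀` to `β` by strictly less than `√ρ ‖β - β₀‖`, and
since `ρ ≤ λ_min(M)` the data-fit term `√((β - β₀)ᵀ M (β - β₀))` is at least that much.
-/

open Matrix
open scoped MatrixOrder

theorem Matrix.IsHermitian.mul_dotProduct_self_le_dotProduct_mulVec {n : Type*} [Fintype n]
    [DecidableEq n] {A : Matrix n n ℝ} (hA : A.IsHermitian) {ρ : ℝ}
    (hρ : ∀ i, ρ ≤ hA.eigenvalues i) (v : n → ℝ) : ρ * (v ⬝ᵥ v) ≤ v ⬝ᵥ (A *ᵥ v) := by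
  have hle : algebraMap ℝ (Matrix n n ℝ) ρ ≤ A := by
    rw [algebraMap_le_iff_le_spectrum hA.isSelfAdjoint, hA.spectrum_real_eq_range_eigenvalues]
    rintro _ ⟨i, rfl⟩
    exact hρ i
  simpa [sub_mulVec, Algebra.algebraMap_eq_smul_one, smul_mulVec] using
    (Matrix.le_iff.mp hle).dotProduct_mulVec_nonneg v

theorem sqrt_norm_sq_add_lt_norm_sub_add_sqrt {E : Type*} [NormedAddCommGroup E]
    [InnerProductSpace ℝ E] {x y : E} (hxy : x ≠ y) {c : ℝ} (hc : 0 < c) :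
    √(‖x‖ ^ 2 + c) < ‖x - y‖ + √(‖y‖ ^ 2 + c) := by
  have hd : 0 < ‖x - y‖ := norm_pos_iff.2 (sub_ne_zero.2 hxy)
  have hy : ‖y‖ < √(‖y‖ ^ 2 + c) := Real.lt_sqrt_of_sq_lt (by linarith)
  have hexpand : ‖x‖ ^ 2 = ‖y‖ ^ 2 + 2 * inner ℝ y (x - y) + ‖x - y‖ ^ 2 := by
    simpa using norm_add_sq_real y (x - y)
  have hcs : inner ℝ y (x - y) < √(‖y‖ ^ 2 + c) * ‖x - y‖ :=
    (real_inner_le_norm y (x - y)).trans_lt (mul_lt_mul_of_pos_right hy hd)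
  rw [Real.sqrt_lt' (by positivity)]
  nlinarith [Real.sq_sqrt (show 0 ≤ ‖y‖ ^ 2 + c by positivity)]

theorem stmt_4_general (p : ℕ) (M : Matrix (Fin p) (Fin p) ℝ)
    (hM : M.PosDef) (β₀ : Fin p → ℝ) (ρ : ℝ)
    (hρ : ρ ≤ ⨅ i, hM.1.eigenvalues i) :
    ∀ β : Fin p → ℝ, β ≠ β₀ →
      Real.sqrt (ρ * ((∑ i, β₀ i ^ 2) + 1)) <
        Real.sqrt ((β - β₀) ⬝ᵥ (M *ᵥ (β - β₀))) +
          Real.sqrt (ρ * ((∑ i, β i ^ 2) + 1)) := by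
  intro β hβ
  have hnorm (γ : Fin p → ℝ) : ∑ i, γ i ^ 2 = ‖WithLp.toLp 2 γ‖ ^ 2 :=
    (EuclideanSpace.real_norm_sq_eq _).symm
  rw [hnorm, hnorm]
  rcases le_or_gt ρ 0 with hρ0 | hρ0
  · rw [Real.sqrt_eq_zero_of_nonpos (mul_nonpos_of_nonpos_of_nonneg hρ0 (by positivity))]
    have hpos := hM.dotProduct_mulVec_pos (sub_ne_zero.2 hβ)
    rw [star_trivial] at hpos
    positivity
  have hquad : √ρ * ‖WithLp.toLp 2 (β - β₀)‖ ≤ √((β - β₀) ⬝ᵥ (M *ᵥ (β - β₀))) := by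
    rw [← Real.sqrt_sq (norm_nonneg _), ← Real.sqrt_mul hρ0.le, ← hnorm]
    refine Real.sqrt_le_sqrt ?_
    simpa [dotProduct, sq] using hM.1.mul_dotProduct_self_le_dotProduct_mulVec
      (fun i ↦ hρ.trans (ciInf_le (Finite.bddBelow_range _) i)) (β - β₀)
  calc √(ρ * (‖WithLp.toLp 2 β₀‖ ^ 2 + 1))
      = √ρ * √(‖WithLp.toLp 2 β₀‖ ^ 2 + 1) := Real.sqrt_mul hρ0.le _
    _ < √ρ * (‖WithLp.toLp 2 β₀ - WithLp.toLp 2 β‖ + √(‖WithLp.toLp 2 β‖ ^ 2 + 1)) :=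
        mul_lt_mul_of_pos_left
          (sqrt_norm_sq_add_lt_norm_sub_add_sqrt (by simpa using hβ.symm) one_pos)
          (Real.sqrt_pos.2 hρ0)
    _ = √ρ * ‖WithLp.toLp 2 (β - β₀)‖ + √(ρ * (‖WithLp.toLp 2 β‖ ^ 2 + 1)) := by
        rw [norm_sub_rev, ← WithLp.toLp_sub, mul_add, Real.sqrt_mul hρ0.le]
    _ ≤ _ := add_le_add_left hquad _

/-- If `M` is symmetric positive definite and `0 ≤ ρ ≤ λ_min(M)`, then `β₀`
is the unique global minimizer of `β ↦ √((β−β₀)ᵀM(β−β₀)) + √(ρ(‖β‖²+1))`. -/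
theorem stmt_4 (p : ℕ) (hp : 1 ≤ p) (M : Matrix (Fin p) (Fin p) ℝ)
    (hM : M.PosDef) (β₀ : Fin p → ℝ) (ρ : ℝ) (h0 : 0 ≤ ρ)
    (hρ : ρ ≤ ⨅ i, hM.1.eigenvalues i) :
    ∀ β : Fin p → ℝ, β ≠ β₀ →
      Real.sqrt (ρ * ((∑ i, β₀ i ^ 2) + 1)) <
        Real.sqrt ((β - β₀) ⬝ᵥ (M *ᵥ (β - β₀))) +
          Real.sqrt (ρ * ((∑ i, β i ^ 2) + 1)) :=
  stmt_4_general p M hM β₀ ρ hρ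
end

section
/- Let p ≥ 1, let β₀, δ ∈ ℝ^p, and let (ρ_n) be a sequence of nonnegative real numbers with ρ_n → ρ for some ρ ≥ 0. Then, as n → ∞, √(nρ_n(1 + ‖β₀ + δ/√n‖²)) − √(nρ_n(1 + ‖β₀‖²)) converges to √ρ · ⟨β₀, δ⟩ / √(1 + ‖β₀‖²). -/
/-!
Both terms factor as `√ρₙ · √n · √(1 + ‖·‖²)`, so the difference is `√ρₙ` times
`√n (√(1 + ‖β₀ + δ/√n‖²) − √b)` with `b = 1 + ‖β₀‖²`. Expanding the square,
`√n (‖β₀ + δ/√n‖² − ‖β₀‖²) = 2⟨β₀, δ⟩ + ‖δ‖²/√n → 2⟨β₀, δ⟩`, and the derivative `1/(2√b)` of the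
square root at `b` turns this into `√n (√(1 + ‖β₀ + δ/√n‖²) − √b) → ⟨β₀, δ⟩/√b`.
-/

open Filter Topology Finset

theorem mul_sum_add_div_sq_sub_sum_sq {ι : Type*} [Fintype ι] (x h : ι → ℝ) {t : ℝ}
    (ht : t ≠ 0) :
    t * (∑ i, (x i + h i / t) ^ 2 - ∑ i, x i ^ 2) = 2 * ∑ i, x i * h i + (∑ i, h i ^ 2) / t := by
  have hterm : ∀ i, (x i + h i / t) ^ 2 - x i ^ 2 = (2 * (x i * h i) + h i ^ 2 / t) / t := by
    intro i
    field_simp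
    ring
  rw [← sum_sub_distrib, sum_congr rfl fun i _ => hterm i, ← sum_div, mul_div_cancel₀ _ ht,
    sum_add_distrib, ← mul_sum, ← sum_div]

theorem tendsto_mul_sum_add_div_sq_sub_sum_sq {ι : Type*} [Fintype ι] (x h : ι → ℝ) :
    Tendsto (fun t : ℝ => t * (∑ i, (x i + h i / t) ^ 2 - ∑ i, x i ^ 2)) atTop
      (𝓝 (2 * ∑ i, x i * h i)) := by
  have hlim : Tendsto (fun t : ℝ => 2 * ∑ i, x i * h i + (∑ i, h i ^ 2) / t) atTop
      (𝓝 (2 * ∑ i, x i * h i + 0)) :=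
    tendsto_const_nhds.add (tendsto_const_nhds.div_atTop tendsto_id)
  rw [add_zero] at hlim
  refine hlim.congr' ?_
  filter_upwards [eventually_gt_atTop 0] with t ht
  exact (mul_sum_add_div_sq_sub_sum_sq x h ht.ne').symm

theorem tendsto_mul_sqrt_sub_sqrt {α : Type*} {l : Filter α} {t g : α → ℝ} {b L : ℝ}
    (hb : 0 < b) (ht : Tendsto t l atTop) (hg : Tendsto (fun x => t x * (g x - b)) l (𝓝 L)) :
    Tendsto (fun x => t x * (√(g x) - √b)) l (𝓝 (L / (2 * √b))) := by
  have hgb : Tendsto g l (𝓝 b) := by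
    have hsub : Tendsto (fun x => t x * (g x - b) / t x + b) l (𝓝 (0 + b)) :=
      (hg.div_atTop ht).add_const b
    rw [zero_add] at hsub
    refine hsub.congr' ?_
    filter_upwards [ht.eventually_ne_atTop 0] with x hx
    rw [mul_div_cancel_left₀ _ hx, sub_add_cancel]
  have hquot : Tendsto (fun x => t x * (g x - b) / (√(g x) + √b)) l (𝓝 (L / (√b + √b))) :=
    hg.div (hgb.sqrt.add_const _) (by positivity)
  rw [← two_mul] at hquot
  refine hquot.congr' ?_
  filter_upwards [hgb.eventually (lt_mem_nhds hb)] with x hx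
  have hdiff : g x - b = (√(g x) - √b) * (√(g x) + √b) := by
    rw [mul_comm, ← sq_sub_sq, Real.sq_sqrt hx.le, Real.sq_sqrt hb.le]
  rw [hdiff, ← mul_assoc, mul_div_cancel_right₀ _ (by positivity)]

theorem stmt_6_general (p : ℕ) (β₀ δ : Fin p → ℝ) (ρseq : ℕ → ℝ)
    (ρ : ℝ)
    (hlim : Filter.Tendsto ρseq Filter.atTop (nhds ρ)) :
    Filter.Tendsto (fun n : ℕ =>
        Real.sqrt ((n : ℝ) * ρseq n * (1 + ∑ i, (β₀ i + δ i / Real.sqrt n) ^ 2)) -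
          Real.sqrt ((n : ℝ) * ρseq n * (1 + ∑ i, β₀ i ^ 2)))
      Filter.atTop
      (nhds (Real.sqrt ρ * (∑ i, β₀ i * δ i) / Real.sqrt (1 + ∑ i, β₀ i ^ 2))) := by
  set b := 1 + ∑ i, β₀ i ^ 2
  have hb : 0 < b := by positivity
  have hsqrt_n : Tendsto (fun n : ℕ => √(n : ℝ)) atTop atTop :=
    Real.tendsto_sqrt_atTop.comp tendsto_natCast_atTop_atTop
  have hexpand : Tendsto (fun n : ℕ => √(n : ℝ) * (1 + ∑ i, (β₀ i + δ i / √n) ^ 2 - b)) atTop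
      (𝓝 (2 * ∑ i, β₀ i * δ i)) := by
    simpa only [b, add_sub_add_left_eq_sub, Function.comp_def] using
      (tendsto_mul_sum_add_div_sq_sub_sum_sq β₀ δ).comp hsqrt_n
  have hfactor : ∀ (n : ℕ) {a : ℝ}, 0 ≤ a → √(n * ρseq n * a) = √(ρseq n) * (√n * √a) := by
    intro n a ha
    rw [mul_comm (n : ℝ), mul_assoc, Real.sqrt_mul' _ (by positivity),
      Real.sqrt_mul (Nat.cast_nonneg n)]
  have hlimit := hlim.sqrt.mul (tendsto_mul_sqrt_sub_sqrt hb hsqrt_n hexpand)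
  rw [mul_div_mul_left _ _ two_ne_zero, ← mul_div_assoc] at hlimit
  refine hlimit.congr fun n => ?_
  rw [hfactor n (by positivity), hfactor n hb.le, ← mul_sub, ← mul_sub]

/-- Limit of the rescaled square-root-ridge penalty difference:
`√(nρₙ(1 + ‖β₀ + δ/√n‖²)) − √(nρₙ(1 + ‖β₀‖²)) → √ρ·⟨β₀,δ⟩/√(1 + ‖β₀‖²)`. -/
theorem stmt_6 (p : ℕ) (hp : 1 ≤ p) (β₀ δ : Fin p → ℝ) (ρseq : ℕ → ℝ)
    (hρseq : ∀ n, 0 ≤ ρseq n) (ρ : ℝ) (hρ : 0 ≤ ρ)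
    (hlim : Filter.Tendsto ρseq Filter.atTop (nhds ρ)) :
    Filter.Tendsto (fun n : ℕ =>
        Real.sqrt ((n : ℝ) * ρseq n * (1 + ∑ i, (β₀ i + δ i / Real.sqrt n) ^ 2)) -
          Real.sqrt ((n : ℝ) * ρseq n * (1 + ∑ i, β₀ i ^ 2)))
      Filter.atTop
      (nhds (Real.sqrt ρ * (∑ i, β₀ i * δ i) / Real.sqrt (1 + ∑ i, β₀ i ^ 2))) :=
  stmt_6_general p β₀ δ ρseq ρ hlim
end

section
/- Let z, γ, β₀ ∈ ℝ with γ ≠ 0, and let ρ be a real number with 0 ≤ ρ ≤ γ². Then the function δ ↦ |z + γδ| + (√ρ · β₀ / √(1 + β₀²)) · δ on ℝ has a unique global minimizer, namely δ* = −z/γ. -/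
/-- For `γ ≠ 0` and `0 ≤ ρ ≤ γ²`, the function
`δ ↦ |z + γδ| + (√ρ·β₀/√(1+β₀²))·δ` has the unique global minimizer `δ* = −z/γ`. -/
theorem stmt_7 (z γ β₀ : ℝ) (hγ : γ ≠ 0) (ρ : ℝ) (h0 : 0 ≤ ρ) (h1 : ρ ≤ γ ^ 2) :
    ∀ δ : ℝ, δ ≠ -z / γ →
      |z + γ * (-z / γ)| + Real.sqrt ρ * β₀ / Real.sqrt (1 + β₀ ^ 2) * (-z / γ) <
        |z + γ * δ| + Real.sqrt ρ * β₀ / Real.sqrt (1 + β₀ ^ 2) * δ := by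
  intro δ hδ
  set c : ℝ := Real.sqrt ρ * β₀ / Real.sqrt (1 + β₀ ^ 2) with hc
  have hz : z + γ * (-z / γ) = 0 := by field_simp; ring
  have hγpos : (0:ℝ) < |γ| := abs_pos.mpr hγ
  -- |c| < |γ|
  have hclt : |c| < |γ| := by
    rcases eq_or_lt_of_le h0 with h | h
    · have : c = 0 := by simp [hc, ← h]
      simpa [this] using hγpos
    · have hs : (0:ℝ) < Real.sqrt (1 + β₀ ^ 2) := by positivity
      have hb : |β₀| < Real.sqrt (1 + β₀ ^ 2) := by
        have : |β₀| = Real.sqrt (β₀ ^ 2) := by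
          rw [Real.sqrt_sq_eq_abs]
        rw [this]
        exact Real.sqrt_lt_sqrt (by positivity) (by linarith)
      have hcabs : |c| = Real.sqrt ρ * |β₀| / Real.sqrt (1 + β₀ ^ 2) := by
        rw [hc, abs_div, abs_mul, abs_of_nonneg (Real.sqrt_nonneg _),
          abs_of_pos hs]
      have hρpos : (0:ℝ) < Real.sqrt ρ := Real.sqrt_pos.mpr h
      have h2 : |c| < Real.sqrt ρ := by
        rw [hcabs, div_lt_iff₀ hs]
        nlinarith
      have h3 : Real.sqrt ρ ≤ |γ| := by
        rw [← Real.sqrt_sq_eq_abs]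
        exact Real.sqrt_le_sqrt h1
      linarith
  set u : ℝ := δ + z / γ with hu
  have hune : u ≠ 0 := by
    intro h
    apply hδ
    have : δ = -(z / γ) := by linarith [hu ▸ h]
    simpa [neg_div] using this
  have hzd : z + γ * δ = γ * u := by
    rw [hu]; field_simp; ring
  have habs : |z + γ * δ| = |γ| * |u| := by rw [hzd, abs_mul]
  have hupos : (0:ℝ) < |u| := abs_pos.mpr hune
  have key : |c * u| < |γ| * |u| := by
    rw [abs_mul]
    exact mul_lt_mul_of_pos_right hclt hupos
  have h4 : -(c * u) ≤ |c * u| := neg_le_abs _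
  have hdd : δ = u + (-z / γ) := by rw [hu]; ring
  rw [hz, abs_zero, habs, hdd]
  have h5 : c * (u + -z / γ) = c * u + c * (-z / γ) := by ring
  clear_value c u
  rw [h5]
  linarith
end

section
/- Let n, p ≥ 1, let X_1, …, X_n ∈ ℝ^p, let ε ∈ ℝ^n with ∑_{i=1}^n ε_i² > 0, let σ > 0 and β₀ ∈ ℝ^p, and set Y_i = X_iᵀβ₀ + σε_i. Define Q̂(β) = (1/n)∑_{i=1}^n (Y_i − X_iᵀβ)², the prediction norm ‖δ‖_{2,n} = √((1/n)∑_{i=1}^n (X_iᵀδ)²), and the score S̃ = ((1/n)∑_{i=1}^n X_i ε_i) / √((1/n)∑_{i=1}^n ε_i²). Suppose c > 1 and λ > 0 satisfy λ ≥ c·n·‖S̃‖₂, suppose κ > 0 satisfies κ‖δ‖₂ ≤ ‖δ‖_{2,n} for all δ ∈ ℝ^p, and suppose (λ/n)² < κ². Then any minimizer β̂ of β ↦ √(Q̂(β)) + (λ/n)√(‖β‖² + 1) over ℝ^p satisfies ‖β̂ − β₀‖₂ ≤ 2(1/c + 1)(λ/n)√(Q̂(β₀)) / (κ² − (λ/n)²),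 where √(Q̂(β₀)) = σ√((1/n)∑_{i=1}^n ε_i²). -/
/-!
Write `δ = β̂ - β₀` and `L = λ/n`. Comparing the objective at `β̂` and `β₀`, and using that
`β ↦ √(‖β‖² + 1)` is 1-Lipschitz, gives `√Q̂(β̂) ≤ √Q̂(β₀) + L‖δ‖`. Squaring and expanding
`Q̂(β̂) = Q̂(β₀) - 2√Q̂(β₀)⟨S̃, δ⟩ + ‖δ‖²_{2,n}`, the cross term is at most `(L/c)√Q̂(β₀)‖δ‖` by
Cauchy–Schwarz and the choice of `λ`, while `‖δ‖_{2,n} ≥ κ‖δ‖`. This leaves the quadratic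
inequality `(κ² - L²)‖δ‖² ≤ 2(1/c + 1)L√Q̂(β₀)‖δ‖`.
-/

open Matrix
open WithLp (toLp)
open RealInnerProductSpace

lemma sqrt_norm_sq_add_one_le_add_norm_sub {E : Type*} [SeminormedAddCommGroup E] (a b : E) :
    √(‖a‖ ^ 2 + 1) ≤ √(‖b‖ ^ 2 + 1) + ‖a - b‖ := by
  have h := norm_add_le (toLp 2 (b, (1 : ℝ))) (toLp 2 (a - b, (0 : ℝ)))
  rw [← WithLp.toLp_add] at h
  simpa [WithLp.prod_norm_eq_of_L2] using h

lemma le_div_of_mul_sq_le_mul {a b x : ℝ} (ha : 0 < a) (hb : 0 ≤ b) (hx : 0 ≤ x)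
    (h : a * x ^ 2 ≤ b * x) : x ≤ b / a := by
  rw [le_div_iff₀ ha]
  rcases hx.eq_or_lt with rfl | hx
  · simpa using hb
  · nlinarith

section SqrtRidge

variable {V H : Type*} [NormedAddCommGroup V] [InnerProductSpace ℝ V]
  [NormedAddCommGroup H] [InnerProductSpace ℝ H]

noncomputable def sqrtRidgeObjective (A : V →ₗ[ℝ] H) (y : H) (L : ℝ) (β : V) : ℝ :=
  ‖y - A β‖ + L * √(‖β‖ ^ 2 + 1)

variable {A : V →ₗ[ℝ] H} {y : H} {L : ℝ} {β₀ βhat : V}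

lemma norm_sub_apply_le_of_isMinOn (hL : 0 ≤ L)
    (hmin : IsMinOn (sqrtRidgeObjective A y L) Set.univ βhat) (β : V) :
    ‖y - A βhat‖ ≤ ‖y - A β‖ + L * ‖βhat - β‖ := by
  have hβ : sqrtRidgeObjective A y L βhat ≤ sqrtRidgeObjective A y L β := hmin (Set.mem_univ β)
  have hpen := mul_le_mul_of_nonneg_left (sqrt_norm_sq_add_one_le_add_norm_sub β βhat) hL
  rw [norm_sub_rev] at hpen
  unfold sqrtRidgeObjective at hβ
  linarith

theorem norm_sub_le_of_isMinOn_sqrtRidgeObjective {κ s : ℝ} (hL : 0 ≤ L) (hs : 0 ≤ s)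
    (hκ : 0 ≤ κ) (hLκ : L ^ 2 < κ ^ 2)
    (hscore : ∀ δ, ⟪y - A β₀, A δ⟫ ≤ s * ‖y - A β₀‖ * ‖δ‖)
    (hcompat : ∀ δ, κ * ‖δ‖ ≤ ‖A δ‖)
    (hmin : IsMinOn (sqrtRidgeObjective A y L) Set.univ βhat) :
    ‖βhat - β₀‖ ≤ 2 * (s + L) * ‖y - A β₀‖ / (κ ^ 2 - L ^ 2) := by
  set u := y - A β₀
  set δ := βhat - β₀
  have hfit : ‖u - A δ‖ ≤ ‖u‖ + L * ‖δ‖ := by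
    simpa [u, δ, map_sub, sub_sub_sub_cancel_right] using
      norm_sub_apply_le_of_isMinOn hL hmin β₀
  have hbasic : ‖A δ‖ ^ 2 ≤ 2 * ⟪u, A δ⟫ + 2 * L * ‖u‖ * ‖δ‖ + L ^ 2 * ‖δ‖ ^ 2 := by
    have := pow_le_pow_left₀ (norm_nonneg _) hfit 2
    rw [norm_sub_sq_real] at this
    linarith
  have hquad : (κ ^ 2 - L ^ 2) * ‖δ‖ ^ 2 ≤ 2 * (s + L) * ‖u‖ * ‖δ‖ := by
    have := pow_le_pow_left₀ (by positivity) (hcompat δ) 2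
    rw [mul_pow] at this
    linarith [hscore δ]
  exact le_div_of_mul_sq_le_mul (by linarith) (by positivity) (norm_nonneg δ) hquad

end SqrtRidge

lemma norm_toLp_eq_sqrt_sum_sq {ι : Type*} [Fintype ι] (v : ι → ℝ) :
    ‖toLp 2 v‖ = √(∑ i, v i ^ 2) := by
  simp [EuclideanSpace.norm_eq]

lemma norm_inv_sqrt_smul_toLp {ι : Type*} [Fintype ι] (m : ℕ) (v : ι → ℝ) :
    ‖(√(m : ℝ))⁻¹ • toLp 2 v‖ = √((∑ i, v i ^ 2) / m) := by
  rw [norm_smul, norm_inv, Real.norm_of_nonneg (Real.sqrt_nonneg _), norm_toLp_eq_sqrt_sum_sq,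
    Real.sqrt_div' _ (Nat.cast_nonneg m), inv_mul_eq_div]

lemma norm_inv_sqrt_smul_toLp_smul {n : ℕ} (ε : Fin n → ℝ) {σ : ℝ} (hσ : 0 ≤ σ) :
    ‖(√(n : ℝ))⁻¹ • toLp 2 (σ • ε)‖ = σ * √((∑ i, ε i ^ 2) / n) := by
  rw [norm_inv_sqrt_smul_toLp]
  simp only [Pi.smul_apply, smul_eq_mul, mul_pow, ← Finset.mul_sum, mul_div_assoc]
  rw [Real.sqrt_mul (sq_nonneg σ), Real.sqrt_sq hσ]

lemma inner_toLp_toLpLin {m k : Type*} [Fintype m] [Fintype k] [DecidableEq k]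
    (X : Matrix m k ℝ) (u : m → ℝ) (δ : EuclideanSpace ℝ k) :
    ⟪toLp 2 u, toLpLin 2 2 X δ⟫ = ⟪toLp 2 (u ᵥ* X), δ⟫ := by
  simp only [toLpLin_apply, EuclideanSpace.inner_eq_star_dotProduct, star_trivial]
  rw [dotProduct_comm, dotProduct_mulVec, dotProduct_comm]

section Design

variable {n p : ℕ} (X : Fin n → Fin p → ℝ)

-- Scaled by `1/√n` so that `‖designOperator X δ‖ = ‖δ‖_{2,n}` and
-- `√Q̂(β) = ‖(√n)⁻¹ • Y - designOperator X β‖`.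
noncomputable def designOperator : EuclideanSpace ℝ (Fin p) →ₗ[ℝ] EuclideanSpace ℝ (Fin n) :=
  (√(n : ℝ))⁻¹ • toLpLin 2 2 (of X)

lemma sub_designOperator_toLp (Y : Fin n → ℝ) (β : Fin p → ℝ) :
    (√(n : ℝ))⁻¹ • toLp 2 Y - designOperator X (toLp 2 β) =
      (√(n : ℝ))⁻¹ • toLp 2 (fun i => Y i - X i ⬝ᵥ β) := by
  simp only [designOperator, LinearMap.smul_apply, ← smul_sub]
  rfl

lemma norm_sub_designOperator_toLp (Y : Fin n → ℝ) (β : Fin p → ℝ) :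
    ‖(√(n : ℝ))⁻¹ • toLp 2 Y - designOperator X (toLp 2 β)‖ =
      √((∑ i, (Y i - X i ⬝ᵥ β) ^ 2) / n) := by
  rw [sub_designOperator_toLp, norm_inv_sqrt_smul_toLp]

lemma norm_designOperator_toLp (δ : Fin p → ℝ) :
    ‖designOperator X (toLp 2 δ)‖ = √((∑ i, (X i ⬝ᵥ δ) ^ 2) / n) :=
  norm_inv_sqrt_smul_toLp n _

lemma inner_designOperator (u : Fin n → ℝ) (δ : EuclideanSpace ℝ (Fin p)) :
    ⟪(√(n : ℝ))⁻¹ • toLp 2 u, designOperator X δ⟫ = ⟪toLp 2 (u ᵥ* of X), δ⟫ / n := by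
  rw [designOperator, LinearMap.smul_apply, real_inner_smul_left, real_inner_smul_right,
    inner_toLp_toLpLin, ← mul_assoc, ← mul_inv, Real.mul_self_sqrt n.cast_nonneg, inv_mul_eq_div]

lemma sub_designOperator_toLp_of_linearModel {Y ε : Fin n → ℝ} {σ : ℝ} {β₀ : Fin p → ℝ}
    (hY : ∀ i, Y i = X i ⬝ᵥ β₀ + σ * ε i) :
    (√(n : ℝ))⁻¹ • toLp 2 Y - designOperator X (toLp 2 β₀) = (√(n : ℝ))⁻¹ • toLp 2 (σ • ε) := by
  rw [sub_designOperator_toLp]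
  congr 2
  ext i
  simp [hY]

end Design

lemma inner_noise_designOperator_le {n p : ℕ} (X : Fin n → Fin p → ℝ) {ε : Fin n → ℝ}
    {σ c lam : ℝ} (hε : 0 < ∑ i, ε i ^ 2) (hσ : 0 ≤ σ) (hc : 0 < c)
    (hscore : c * n * √(∑ j, ((∑ i, X i j * ε i) / n / √((∑ i, ε i ^ 2) / n)) ^ 2) ≤ lam)
    (δ : EuclideanSpace ℝ (Fin p)) :
    ⟪(√(n : ℝ))⁻¹ • toLp 2 (σ • ε), designOperator X δ⟫ ≤
      lam / n / c * (σ * √((∑ i, ε i ^ 2) / n)) * ‖δ‖ := by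
  have hn : (0 : ℝ) < n := by
    rcases n with _ | n
    · simp at hε
    · positivity
  set E := (∑ i, ε i ^ 2) / n
  have hE : 0 < √E := Real.sqrt_pos.2 (div_pos hε hn)
  have hS : toLp 2 (fun j => (∑ i, X i j * ε i) / n / √E) = (n * √E)⁻¹ • toLp 2 (ε ᵥ* of X) := by
    ext j
    simp only [PiLp.smul_apply, vecMul, dotProduct, of_apply, smul_eq_mul, mul_comm]
    ring
  rw [← norm_toLp_eq_sqrt_sum_sq, hS, norm_smul, norm_inv, Real.norm_of_nonneg (by positivity)]
    at hscore
  have hN : ‖toLp 2 (ε ᵥ* of X)‖ ≤ lam * √E / c := by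
    rw [le_div_iff₀ hc]
    field_simp at hscore
    linarith
  calc ⟪(√(n : ℝ))⁻¹ • toLp 2 (σ • ε), designOperator X δ⟫
      = σ / n * ⟪toLp 2 (ε ᵥ* of X), δ⟫ := by
        rw [inner_designOperator, smul_vecMul, WithLp.toLp_smul, real_inner_smul_left]
        ring
    _ ≤ σ / n * (‖toLp 2 (ε ᵥ* of X)‖ * ‖δ‖) := by gcongr; exact real_inner_le_norm _ _
    _ ≤ σ / n * (lam * √E / c * ‖δ‖) := by gcongr
    _ = lam / n / c * (σ * √E) * ‖δ‖ := by ring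

theorem stmt_8_general (n p : ℕ)
    (X : Fin n → Fin p → ℝ) (ε : Fin n → ℝ) (hε : 0 < ∑ i, ε i ^ 2)
    (σ : ℝ) (hσ : 0 < σ) (β₀ : Fin p → ℝ)
    (Y : Fin n → ℝ) (hY : ∀ i, Y i = X i ⬝ᵥ β₀ + σ * ε i)
    (c lam κ : ℝ) (hc : 1 < c) (hlam : 0 < lam)
    (hscore : c * n * Real.sqrt (∑ j,
        ((∑ i, X i j * ε i) / n / Real.sqrt ((∑ i, ε i ^ 2) / n)) ^ 2) ≤ lam)
    (hκ : 0 < κ)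
    (hκle : ∀ δ : Fin p → ℝ,
      κ * Real.sqrt (∑ j, δ j ^ 2) ≤ Real.sqrt ((∑ i, (X i ⬝ᵥ δ) ^ 2) / n))
    (hsmall : (lam / n) ^ 2 < κ ^ 2)
    (βhat : Fin p → ℝ)
    (hmin : ∀ b : Fin p → ℝ,
      Real.sqrt ((∑ i, (Y i - X i ⬝ᵥ βhat) ^ 2) / n) +
          lam / n * Real.sqrt ((∑ j, βhat j ^ 2) + 1) ≤
        Real.sqrt ((∑ i, (Y i - X i ⬝ᵥ b) ^ 2) / n) +
          lam / n * Real.sqrt ((∑ j, b j ^ 2) + 1)) :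
    Real.sqrt (∑ j, (βhat j - β₀ j) ^ 2) ≤
        2 * (1 / c + 1) * (lam / n) * Real.sqrt ((∑ i, (Y i - X i ⬝ᵥ β₀) ^ 2) / n) /
          (κ ^ 2 - (lam / n) ^ 2) ∧
      Real.sqrt ((∑ i, (Y i - X i ⬝ᵥ β₀) ^ 2) / n) = σ * Real.sqrt ((∑ i, ε i ^ 2) / n) := by
  set A := designOperator X
  set y : EuclideanSpace ℝ (Fin n) := (√(n : ℝ))⁻¹ • toLp 2 Y
  have hnoise : y - A (toLp 2 β₀) = (√(n : ℝ))⁻¹ • toLp 2 (σ • ε) :=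
    sub_designOperator_toLp_of_linearModel X hY
  have hnoise_norm : √((∑ i, (Y i - X i ⬝ᵥ β₀) ^ 2) / n) = σ * √((∑ i, ε i ^ 2) / n) := by
    rw [← norm_sub_designOperator_toLp, hnoise, norm_inv_sqrt_smul_toLp_smul ε hσ.le]
  refine ⟨?_, hnoise_norm⟩
  have hcross : ∀ δ, ⟪y - A (toLp 2 β₀), A δ⟫ ≤ lam / n / c * ‖y - A (toLp 2 β₀)‖ * ‖δ‖ := by
    intro δ
    rw [norm_sub_designOperator_toLp, hnoise_norm, hnoise]
    exact inner_noise_designOperator_le X hε hσ.le (by linarith) hscore δ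
  have hcompat : ∀ δ, κ * ‖δ‖ ≤ ‖A δ‖ := by
    rintro ⟨δ⟩
    rw [norm_designOperator_toLp, norm_toLp_eq_sqrt_sum_sq]
    exact hκle δ
  have hminOn : IsMinOn (sqrtRidgeObjective A y (lam / n)) Set.univ (toLp 2 βhat) := by
    refine isMinOn_univ_iff.2 ?_
    rintro ⟨β⟩
    simpa only [sqrtRidgeObjective, y, A, norm_sub_designOperator_toLp,
      EuclideanSpace.real_norm_sq_eq, PiLp.toLp_apply] using hmin β
  have hbound := norm_sub_le_of_isMinOn_sqrtRidgeObjective (by positivity) (by positivity)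
    hκ.le hsmall hcross hcompat hminOn
  rw [← WithLp.toLp_sub, norm_toLp_eq_sqrt_sum_sq, norm_sub_designOperator_toLp] at hbound
  convert hbound using 3
  · rfl
  · ring

/-- Deterministic estimation error bound for the square-root ridge
estimator: if `λ ≥ cn‖S̃‖₂`, `κ‖δ‖₂ ≤ ‖δ‖_{2,n}` for all `δ` and `(λ/n)² < κ²`, then any
minimizer `β̂` of `β ↦ √(Q̂(β)) + (λ/n)√(‖β‖²+1)` satisfies
`‖β̂ − β₀‖₂ ≤ 2(1/c+1)(λ/n)√(Q̂(β₀))/(κ² − (λ/n)²)`,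
with `√(Q̂(β₀)) = σ√((1/n)∑εᵢ²)`. -/
theorem stmt_8 (n p : ℕ) (hn : 1 ≤ n) (hp : 1 ≤ p)
    (X : Fin n → Fin p → ℝ) (ε : Fin n → ℝ) (hε : 0 < ∑ i, ε i ^ 2)
    (σ : ℝ) (hσ : 0 < σ) (β₀ : Fin p → ℝ)
    (Y : Fin n → ℝ) (hY : ∀ i, Y i = X i ⬝ᵥ β₀ + σ * ε i)
    (c lam κ : ℝ) (hc : 1 < c) (hlam : 0 < lam)
    (hscore : c * n * Real.sqrt (∑ j,
        ((∑ i, X i j * ε i) / n / Real.sqrt ((∑ i, ε i ^ 2) / n)) ^ 2) ≤ lam)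
    (hκ : 0 < κ)
    (hκle : ∀ δ : Fin p → ℝ,
      κ * Real.sqrt (∑ j, δ j ^ 2) ≤ Real.sqrt ((∑ i, (X i ⬝ᵥ δ) ^ 2) / n))
    (hsmall : (lam / n) ^ 2 < κ ^ 2)
    (βhat : Fin p → ℝ)
    (hmin : ∀ b : Fin p → ℝ,
      Real.sqrt ((∑ i, (Y i - X i ⬝ᵥ βhat) ^ 2) / n) +
          lam / n * Real.sqrt ((∑ j, βhat j ^ 2) + 1) ≤
        Real.sqrt ((∑ i, (Y i - X i ⬝ᵥ b) ^ 2) / n) +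
          lam / n * Real.sqrt ((∑ j, b j ^ 2) + 1)) :
    Real.sqrt (∑ j, (βhat j - β₀ j) ^ 2) ≤
        2 * (1 / c + 1) * (lam / n) * Real.sqrt ((∑ i, (Y i - X i ⬝ᵥ β₀) ^ 2) / n) /
          (κ ^ 2 - (lam / n) ^ 2) ∧
      Real.sqrt ((∑ i, (Y i - X i ⬝ᵥ β₀) ^ 2) / n) = σ * Real.sqrt ((∑ i, ε i ^ 2) / n) :=
  stmt_8_general n p X ε hε σ hσ β₀ Y hY c lam κ hc hlam hscore hκ hκle hsmall βhat hmin
end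

section
/- Let p ≥ 1, let β₀ ∈ ℝ^p, and let ρ ≥ 0 satisfy ρ‖β₀‖² ≤ 1 + ‖β₀‖². Then β₀ is the unique global minimizer over ℝ^p of the function β ↦ ‖β − β₀‖ + √(ρ(1 + ‖β‖²)); that is, for every β ≠ β₀ the value of this function strictly exceeds its value √(ρ(1 + ‖β₀‖²)) at β₀. -/
lemma key_ineq (a c ρ : ℝ) (hc : 0 ≤ c) (hca : c < a) (h0 : 0 ≤ ρ)
    (hρ : ρ * a ^ 2 ≤ 1 + a ^ 2) :
    Real.sqrt (ρ * (1 + a ^ 2)) < (a - c) + Real.sqrt (ρ * (1 + c ^ 2)) := by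
  have ha : 0 < a := lt_of_le_of_lt hc hca
  have hA : 0 ≤ ρ * (1 + a ^ 2) := by positivity
  have hC : 0 ≤ ρ * (1 + c ^ 2) := by positivity
  set s := Real.sqrt (ρ * (1 + a ^ 2)) with hs
  set t := Real.sqrt (ρ * (1 + c ^ 2)) with ht
  have hs0 : 0 ≤ s := Real.sqrt_nonneg _
  have ht0 : 0 ≤ t := Real.sqrt_nonneg _
  have hs2 : s ^ 2 = ρ * (1 + a ^ 2) := Real.sq_sqrt hA
  have ht2 : t ^ 2 = ρ * (1 + c ^ 2) := Real.sq_sqrt hC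
  by_contra h
  push_neg at h
  -- h : a - c + t ≤ s
  rcases eq_or_lt_of_le h0 with hρ0 | hρ0
  · -- ρ = 0
    have : s = 0 := by rw [hs, ← hρ0]; simp
    have : t = 0 := by rw [ht, ← hρ0]; simp
    nlinarith
  · -- ρ > 0
    have h1 : ρ * (a + c) ≥ s + t := by nlinarith [sq_nonneg (s - t)]
    -- s ≥ ρ * a
    have hsa : ρ * a ≤ s := by nlinarith
    -- ρ c² < 1 + c²
    have hcc : ρ * c ^ 2 < 1 + c ^ 2 := by nlinarith
    have htc : ρ * c < t := by nlinarith
    nlinarith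

/-- If `ρ ≥ 0` and `ρ‖β₀‖² ≤ 1 + ‖β₀‖²`, then `β₀` is the unique global
minimizer of `β ↦ ‖β − β₀‖ + √(ρ(1 + ‖β‖²))`. -/
theorem stmt_10 (p : ℕ) (hp : 1 ≤ p) (β₀ : Fin p → ℝ) (ρ : ℝ) (h0 : 0 ≤ ρ)
    (hρ : ρ * (∑ i, β₀ i ^ 2) ≤ 1 + ∑ i, β₀ i ^ 2) :
    ∀ β : Fin p → ℝ, β ≠ β₀ →
      Real.sqrt (ρ * (1 + ∑ i, β₀ i ^ 2)) <
        Real.sqrt (∑ i, (β i - β₀ i) ^ 2) + Real.sqrt (ρ * (1 + ∑ i, β i ^ 2)) := by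
  intro β hβ
  set a := Real.sqrt (∑ i, β₀ i ^ 2) with haa
  set c := Real.sqrt (∑ i, β i ^ 2) with hcc
  set d := Real.sqrt (∑ i, (β i - β₀ i) ^ 2) with hdd
  have hsum0 : (0:ℝ) ≤ ∑ i, β₀ i ^ 2 := Finset.sum_nonneg fun i _ => sq_nonneg _
  have hsum1 : (0:ℝ) ≤ ∑ i, β i ^ 2 := Finset.sum_nonneg fun i _ => sq_nonneg _
  have ha2 : a ^ 2 = ∑ i, β₀ i ^ 2 := Real.sq_sqrt hsum0
  have hc2 : c ^ 2 = ∑ i, β i ^ 2 := Real.sq_sqrt hsum1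
  have ha0 : 0 ≤ a := Real.sqrt_nonneg _
  have hc0 : 0 ≤ c := Real.sqrt_nonneg _
  -- d > 0
  have hd0 : 0 < d := by
    rw [hdd]
    apply Real.sqrt_pos.mpr
    obtain ⟨i, hi⟩ := Function.ne_iff.mp hβ
    have hne : β i - β₀ i ≠ 0 := sub_ne_zero.mpr hi
    calc (0:ℝ) < (β i - β₀ i) ^ 2 := by positivity
      _ ≤ ∑ j, (β j - β₀ j) ^ 2 :=
        Finset.single_le_sum (f := fun j => (β j - β₀ j) ^ 2)
          (fun j _ => sq_nonneg _) (Finset.mem_univ i)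
  -- reverse triangle: a - c ≤ d, via EuclideanSpace
  have htri : a - c ≤ d := by
    set x : EuclideanSpace ℝ (Fin p) := (EuclideanSpace.equiv (Fin p) ℝ : EuclideanSpace ℝ (Fin p) ≃L[ℝ] (Fin p → ℝ)).symm β₀ with hx
    set y : EuclideanSpace ℝ (Fin p) := (EuclideanSpace.equiv (Fin p) ℝ : EuclideanSpace ℝ (Fin p) ≃L[ℝ] (Fin p → ℝ)).symm β with hy
    have hnx : ‖x‖ = a := by
      rw [EuclideanSpace.norm_eq]; congr 1; apply Finset.sum_congr rfl
      intro i _; rw [Real.norm_eq_abs, sq_abs]; rfl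
    have hny : ‖y‖ = c := by
      rw [EuclideanSpace.norm_eq]; congr 1; apply Finset.sum_congr rfl
      intro i _; rw [Real.norm_eq_abs, sq_abs]; rfl
    have hnxy : ‖x - y‖ = d := by
      rw [EuclideanSpace.norm_eq]; congr 1; apply Finset.sum_congr rfl
      intro i _
      have : (x - y) i = β₀ i - β i := rfl
      rw [this, Real.norm_eq_abs, sq_abs]; ring
    calc a - c = ‖x‖ - ‖y‖ := by rw [hnx, hny]
      _ ≤ ‖x - y‖ := norm_sub_norm_le x y
      _ = d := hnxy
  rw [← ha2, ← hc2]
  rcases lt_or_ge c a with hca | hac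
  · have := key_ineq a c ρ hc0 hca h0 (by rw [ha2]; exact hρ)
    linarith
  · have : Real.sqrt (ρ * (1 + a ^ 2)) ≤ Real.sqrt (ρ * (1 + c ^ 2)) := by
      apply Real.sqrt_le_sqrt
      have h2 : a ^ 2 ≤ c ^ 2 := pow_le_pow_left₀ ha0 hac 2
      nlinarith
    linarith
end

section
/- Let p, k ≥ 1, let Θ ⊆ ℝ^p, let θ₀ ∈ Θ, let m : Θ → ℝ^k satisfy m(θ₀) = 0, and let W : Θ → (k×k real matrices) be such that W(θ) is positive semidefinite for every θ ∈ Θ. Suppose there is ρ̄ > 0 such that m(θ)ᵀW(θ)m(θ) ≥ ρ̄‖θ − θ₀‖² for all θ ∈ Θ, and let 0 < ρ ≤ ρ̄. Then θ₀ is the unique minimizer over Θ of the function θ ↦ √(m(θ)ᵀW(θ)m(θ)) + √(ρ(1 + ‖θ‖²)); that is, for every θ ∈ Θ with θ ≠ θ₀ this function strictly exceeds its value √(ρ(1 + ‖θ₀‖²)) at θ₀. -/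
open Matrix

lemma stmt11_norm_eq (p : ℕ) (z : Fin p → ℝ) :
    ‖(WithLp.equiv 2 (Fin p → ℝ)).symm z‖ = Real.sqrt (∑ i, z i ^ 2) := by
  rw [EuclideanSpace.norm_eq]
  congr 1
  refine Finset.sum_congr rfl fun i _ => ?_
  rw [Real.norm_eq_abs, sq_abs]
  rfl

lemma stmt11_tri (p : ℕ) (θ θ₀ : Fin p → ℝ) :
    Real.sqrt (∑ i, θ₀ i ^ 2) ≤
      Real.sqrt (∑ i, θ i ^ 2) + Real.sqrt (∑ i, (θ i - θ₀ i) ^ 2) := by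
  have h := norm_sub_le ((WithLp.equiv 2 (Fin p → ℝ)).symm θ)
    ((WithLp.equiv 2 (Fin p → ℝ)).symm (fun i => θ i - θ₀ i))
  have h1 : (WithLp.equiv 2 (Fin p → ℝ)).symm θ -
      (WithLp.equiv 2 (Fin p → ℝ)).symm (fun i => θ i - θ₀ i)
      = (WithLp.equiv 2 (Fin p → ℝ)).symm θ₀ := by
    ext i; simp
  rw [h1, stmt11_norm_eq, stmt11_norm_eq, stmt11_norm_eq] at h
  exact h

/-- Population-level uniqueness for square-root-ridge regularized GMM:
if `m(θ)ᵀW(θ)m(θ) ≥ ρ̄‖θ−θ₀‖²` on `Θ`, `m(θ₀) = 0`, each `W(θ)` is PSD and `0 < ρ ≤ ρ̄`,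
then `θ₀` uniquely minimizes `θ ↦ √(m(θ)ᵀW(θ)m(θ)) + √(ρ(1+‖θ‖²))` over `Θ`. -/
theorem stmt_11 (p k : ℕ) (hp : 1 ≤ p) (hk : 1 ≤ k)
    (Θ : Set (Fin p → ℝ)) (θ₀ : Fin p → ℝ) (hθ₀ : θ₀ ∈ Θ)
    (m : (Fin p → ℝ) → (Fin k → ℝ)) (hm0 : m θ₀ = 0)
    (W : (Fin p → ℝ) → Matrix (Fin k) (Fin k) ℝ)
    (hW : ∀ θ ∈ Θ, (W θ).PosSemidef)
    (ρbar : ℝ) (hρbar : 0 < ρbar)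
    (hdom : ∀ θ ∈ Θ, ρbar * ∑ i, (θ i - θ₀ i) ^ 2 ≤ m θ ⬝ᵥ (W θ *ᵥ m θ))
    (ρ : ℝ) (h0 : 0 < ρ) (hρ : ρ ≤ ρbar) :
    ∀ θ ∈ Θ, θ ≠ θ₀ →
      Real.sqrt (ρ * (1 + ∑ i, θ₀ i ^ 2)) <
        Real.sqrt (m θ ⬝ᵥ (W θ *ᵥ m θ)) + Real.sqrt (ρ * (1 + ∑ i, θ i ^ 2)) := by
  intro θ hθ hne
  set A := ∑ i, θ₀ i ^ 2 with hAdef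
  set B := ∑ i, θ i ^ 2 with hBdef
  set D := ∑ i, (θ i - θ₀ i) ^ 2 with hDdef
  have hA0 : 0 ≤ A := Finset.sum_nonneg fun i _ => sq_nonneg _
  have hB0 : 0 ≤ B := Finset.sum_nonneg fun i _ => sq_nonneg _
  have hD0 : 0 < D := by
    obtain ⟨i, hi⟩ := Function.ne_iff.mp hne
    exact Finset.sum_pos' (fun j _ => sq_nonneg _)
      ⟨i, Finset.mem_univ i, by have := sub_ne_zero.mpr hi; positivity⟩
  -- triangle inequality
  have htri : Real.sqrt A ≤ Real.sqrt B + Real.sqrt D := stmt11_tri p θ θ₀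
  -- lower bound on the moment term
  have hQ : ρ * D ≤ m θ ⬝ᵥ (W θ *ᵥ m θ) := by
    have := hdom θ hθ
    nlinarith [hD0.le]
  have hQsqrt : Real.sqrt ρ * Real.sqrt D ≤ Real.sqrt (m θ ⬝ᵥ (W θ *ᵥ m θ)) := by
    rw [← Real.sqrt_mul h0.le]
    exact Real.sqrt_le_sqrt hQ
  -- key scalar inequality
  have hkey : Real.sqrt (1 + A) < Real.sqrt D + Real.sqrt (1 + B) := by
    have h1 : 1 + A < (Real.sqrt D + Real.sqrt (1 + B)) ^ 2 := by
      have e1 : (Real.sqrt D + Real.sqrt (1 + B)) ^ 2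
          = D + 2 * Real.sqrt D * Real.sqrt (1 + B) + (1 + B) := by
        rw [add_sq, Real.sq_sqrt hD0.le, Real.sq_sqrt (by linarith : (0:ℝ) ≤ 1 + B)]
      have hAle : A ≤ B + 2 * Real.sqrt B * Real.sqrt D + D := by
        nlinarith [Real.sq_sqrt hA0, Real.sq_sqrt hB0, Real.sq_sqrt hD0.le,
          Real.sqrt_nonneg A, Real.sqrt_nonneg B, Real.sqrt_nonneg D]
      have hBlt : Real.sqrt B < Real.sqrt (1 + B) :=
        Real.sqrt_lt_sqrt hB0 (by linarith)
      have hDpos : 0 < Real.sqrt D := Real.sqrt_pos.mpr hD0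
      nlinarith
    calc Real.sqrt (1 + A) < Real.sqrt ((Real.sqrt D + Real.sqrt (1 + B)) ^ 2) :=
          Real.sqrt_lt_sqrt (by linarith) h1
      _ = Real.sqrt D + Real.sqrt (1 + B) :=
          Real.sqrt_sq (by positivity)
  have hρpos : 0 < Real.sqrt ρ := Real.sqrt_pos.mpr h0
  calc Real.sqrt (ρ * (1 + A)) = Real.sqrt ρ * Real.sqrt (1 + A) :=
        Real.sqrt_mul h0.le _
    _ < Real.sqrt ρ * (Real.sqrt D + Real.sqrt (1 + B)) := by
        exact (mul_lt_mul_iff_right₀ hρpos).mpr hkey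
    _ = Real.sqrt ρ * Real.sqrt D + Real.sqrt ρ * Real.sqrt (1 + B) := by ring
    _ ≤ Real.sqrt (m θ ⬝ᵥ (W θ *ᵥ m θ)) + Real.sqrt (ρ * (1 + B)) := by
        rw [Real.sqrt_mul h0.le]
        exact add_le_add hQsqrt le_rfl
end

section
/- Let d ≥ 1, let q ∈ (1, 2] and let p = q/(q−1) ∈ [2, ∞) be its Hölder conjugate. Then for all β, β₀ ∈ ℝ^d: ‖β − β₀‖₂ + (∑_{j=1}^d |β_j|^p + 1)^{1/p} ≥ (∑_{j=1}^d |(β₀)_j|^p + 1)^{1/p}, with equality if and only if β = β₀. -/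
/-!
Write `x̃ = (x, 1)` and `A = ∑ |β₀ⱼ|^p`. Pairing with the dual vector `(|β₀ⱼ|^(p-1), 1)` of
`β̃₀` in `ℓ^q` (Hölder twice) gives the sharpened Minkowski inequality
`‖β̃₀‖_p ≤ ‖β̃‖_p + c ‖β - β₀‖_p` with `c = (A / (A + 1))^(1/q) < 1`: the difference `β̃ - β̃₀`
vanishes in the last coordinate, where the dual vector carries part of its mass. Since
`‖·‖_p ≤ ‖·‖₂` for `p ≥ 2`, equality would force `‖β - β₀‖₂ ≤ c ‖β - β₀‖₂`, i.e. `β = β₀`.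
-/

open Finset Real

variable {ι : Type*}

theorem Real.sum_rpow_le_rpow_sum (s : Finset ι) {f : ι → ℝ} (hf : ∀ i ∈ s, 0 ≤ f i) {r : ℝ}
    (hr : 1 ≤ r) : ∑ i ∈ s, f i ^ r ≤ (∑ i ∈ s, f i) ^ r := by
  classical
  induction s using Finset.induction_on with
  | empty => simp [zero_rpow (by linarith : r ≠ 0)]
  | insert a s ha ih =>
    rw [sum_insert ha, sum_insert ha]
    have hfa : 0 ≤ f a := hf a (mem_insert_self a s)
    have hfs : ∀ i ∈ s, 0 ≤ f i := fun i hi ↦ hf i (mem_insert_of_mem hi)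
    calc f a ^ r + ∑ i ∈ s, f i ^ r ≤ f a ^ r + (∑ i ∈ s, f i) ^ r := by gcongr; exact ih hfs
      _ ≤ (f a + ∑ i ∈ s, f i) ^ r := add_rpow_le_rpow_add hfa (sum_nonneg hfs) hr

theorem Real.Lp_le_sqrt_sum_sq (s : Finset ι) (f : ι → ℝ) {p : ℝ} (hp : 2 ≤ p) :
    (∑ i ∈ s, |f i| ^ p) ^ (1 / p) ≤ √(∑ i ∈ s, f i ^ 2) := by
  have hp0 : 0 < p := by linarith
  have hsq : ∀ i, |f i| ^ p = (f i ^ 2) ^ (p / 2) := fun i ↦ by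
    rw [← sq_abs, ← rpow_natCast, ← rpow_mul (abs_nonneg _)]; congr 1; ring
  calc (∑ i ∈ s, |f i| ^ p) ^ (1 / p)
      ≤ ((∑ i ∈ s, f i ^ 2) ^ (p / 2)) ^ (1 / p) := by
        simp only [hsq]
        gcongr
        exact sum_rpow_le_rpow_sum s (fun i _ ↦ sq_nonneg _) (by linarith)
    _ = √(∑ i ∈ s, f i ^ 2) := by
        rw [← rpow_mul (sum_nonneg fun i _ ↦ sq_nonneg _), sqrt_eq_rpow]
        congr 1
        field_simp

theorem Real.sum_abs_rpow_sub_one_mul_le (s : Finset ι) {p q : ℝ} (hpq : p.HolderConjugate q)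
    (u v : ι → ℝ) :
    ∑ i ∈ s, |u i| ^ (p - 1) * |v i| ≤
      (∑ i ∈ s, |u i| ^ p) ^ (1 / q) * (∑ i ∈ s, |v i| ^ p) ^ (1 / p) := by
  have hdual : ∀ i, (|u i| ^ (p - 1)) ^ q = |u i| ^ p := fun i ↦ by
    rw [← rpow_mul (abs_nonneg _), hpq.sub_one_mul_conj]
  simpa only [hdual] using inner_le_Lp_mul_Lq_of_nonneg s hpq.symm
    (fun i _ ↦ rpow_nonneg (abs_nonneg (u i)) (p - 1)) (fun i _ ↦ abs_nonneg (v i))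

theorem Real.abs_rpow_le_mul_add (p : ℝ) (hp : 1 ≤ p) (x y : ℝ) :
    |x| ^ p ≤ |x| ^ (p - 1) * (|y| + |y - x|) := by
  calc |x| ^ p = |x| ^ (p - 1) * |x| := by
        rw [← rpow_add_one' (abs_nonneg x) (by linarith), sub_add_cancel]
    _ ≤ |x| ^ (p - 1) * (|y| + |y - x|) := by
        gcongr
        simpa [abs_sub_comm x y] using abs_add_le y (x - y)

theorem Real.Lp_add_one_le_add_mul_Lp_sub [Fintype ι] {p q : ℝ} (hpq : p.HolderConjugate q)
    (u v : ι → ℝ) :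
    ((∑ i, |u i| ^ p) + 1) ^ (1 / p) ≤
      ((∑ i, |v i| ^ p) + 1) ^ (1 / p) +
        ((∑ i, |u i| ^ p) / ((∑ i, |u i| ^ p) + 1)) ^ (1 / q) *
          (∑ i, |v i - u i| ^ p) ^ (1 / p) := by
  set A := ∑ i, |u i| ^ p
  have hA : 0 ≤ A := sum_nonneg fun i _ ↦ rpow_nonneg (abs_nonneg _) _
  have hA1 : 0 < A + 1 := by linarith
  have hsplit : A ≤ ∑ i, |u i| ^ (p - 1) * |v i| + ∑ i, |u i| ^ (p - 1) * |v i - u i| := by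
    rw [← sum_add_distrib]
    exact sum_le_sum fun i _ ↦ by rw [← mul_add]; exact abs_rpow_le_mul_add p hpq.lt.le _ _
  -- Hölder for the augmented vectors `(u, 1)` and `(v, 1)`, indexed by `Option ι`.
  have hholder_aug : ∑ i, |u i| ^ (p - 1) * |v i| + 1 ≤
      (A + 1) ^ (1 / q) * ((∑ i, |v i| ^ p) + 1) ^ (1 / p) := by
    simpa [Fintype.sum_option, add_comm] using sum_abs_rpow_sub_one_mul_le univ hpq
      (fun o : Option ι ↦ o.elim 1 u) (fun o ↦ o.elim 1 v)
  have hholder := sum_abs_rpow_sub_one_mul_le univ hpq u (fun i ↦ v i - u i)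
  have hconj : (A + 1) ^ (1 / q) * (A + 1) ^ (1 / p) = A + 1 := by
    have : 1 / q + 1 / p = 1 := by simpa [one_div, add_comm] using hpq.inv_add_inv_eq_one
    rw [← rpow_add hA1, this, rpow_one]
  have hpos : 0 < (A + 1) ^ (1 / q) := rpow_pos_of_pos hA1 _
  rw [← mul_le_mul_iff_right₀ hpos, hconj, mul_add, div_rpow hA hA1.le, ← mul_assoc,
    mul_div_cancel₀ _ hpos.ne']
  linarith

theorem Real.sqrt_sum_sq_sub_eq_zero_iff [Fintype ι] {x y : ι → ℝ} :
    √(∑ i, (x i - y i) ^ 2) = 0 ↔ x = y := by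
  rw [sqrt_eq_zero (sum_nonneg fun i _ ↦ sq_nonneg _),
    sum_eq_zero_iff_of_nonneg fun i _ ↦ sq_nonneg _]
  simp [sub_eq_zero, funext_iff]

theorem stmt_12_general (d : ℕ) (q : ℝ) (hq1 : 1 < q) (hq2 : q ≤ 2)
    (p : ℝ) (hp : p = q / (q - 1)) (β β₀ : Fin d → ℝ) :
    ((∑ j, |β₀ j| ^ p) + 1) ^ (1 / p) ≤
      Real.sqrt (∑ j, (β j - β₀ j) ^ 2) + ((∑ j, |β j| ^ p) + 1) ^ (1 / p) ∧
    (((∑ j, |β₀ j| ^ p) + 1) ^ (1 / p) =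
        Real.sqrt (∑ j, (β j - β₀ j) ^ 2) + ((∑ j, |β j| ^ p) + 1) ^ (1 / p) ↔
      β = β₀) := by
  have hpq : p.HolderConjugate q := ((holderConjugate_iff_eq_conjExponent hq1).mpr hp).symm
  have hp2 : 2 ≤ p := by rw [hp, le_div_iff₀ (by linarith)]; linarith
  set c := ((∑ j, |β₀ j| ^ p) / ((∑ j, |β₀ j| ^ p) + 1)) ^ (1 / q)
  have hc0 : 0 ≤ c := by positivity
  have hc1 : c < 1 :=
    rpow_lt_one (by positivity) ((div_lt_one (by positivity)).2 (by linarith)) (by positivity)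
  have hminkowski := Lp_add_one_le_add_mul_Lp_sub hpq β₀ β
  have hLp := Lp_le_sqrt_sum_sq univ (fun j ↦ β j - β₀ j) hp2
  have hLp0 : 0 ≤ (∑ j, |β j - β₀ j| ^ p) ^ (1 / p) := by positivity
  refine ⟨by linarith [mul_le_of_le_one_left hLp0 hc1.le], fun heq ↦ ?_, fun heq ↦ ?_⟩
  · rw [← sqrt_sum_sq_sub_eq_zero_iff]
    nlinarith [mul_le_mul_of_nonneg_left hLp hc0, sqrt_nonneg (∑ j, (β j - β₀ j) ^ 2)]
  · simp [heq]

/-- For `q ∈ (1,2]` with Hölder conjugate `p = q/(q−1) ∈ [2,∞)` and all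
`β, β₀ ∈ ℝ^d`: `‖β−β₀‖₂ + (∑|βⱼ|^p + 1)^{1/p} ≥ (∑|(β₀)ⱼ|^p + 1)^{1/p}`, with equality
iff `β = β₀`. -/
theorem stmt_12 (d : ℕ) (hd : 1 ≤ d) (q : ℝ) (hq1 : 1 < q) (hq2 : q ≤ 2)
    (p : ℝ) (hp : p = q / (q - 1)) (β β₀ : Fin d → ℝ) :
    ((∑ j, |β₀ j| ^ p) + 1) ^ (1 / p) ≤
      Real.sqrt (∑ j, (β j - β₀ j) ^ 2) + ((∑ j, |β j| ^ p) + 1) ^ (1 / p) ∧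
    (((∑ j, |β₀ j| ^ p) + 1) ^ (1 / p) =
        Real.sqrt (∑ j, (β j - β₀ j) ^ 2) + ((∑ j, |β j| ^ p) + 1) ^ (1 / p) ↔
      β = β₀) :=
  stmt_12_general d q hq1 hq2 p hp β β₀
end
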